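/- arXiv:1903.05910 — 2 statements merged into one kernel-verified Lean document; each statement's English description precedes it below -/
import Mathlib

section
/- Let p be a homogeneous noncommutative polynomial of degree δd with grouped coefficient function P, and let A : Fin t → (Fin δ → Fin g) → ℂ. Then p = ∑_{s : Fin t} (∑_{β} A(s,β) • x^β)^d holds in the free algebra if and only if for every μ : Fin d → (Fin δ → Fin g) one has P(μ) = ∑_{s : Fin t} ∏_{i : Fin d} A(s, μ(i)). -/
open scoped BigOperators

/-- The ordered noncommutative word `x_{β 0} x_{β 1} ⋯ x_{β (δ-1)}` in the free algebra. -/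
noncomputable def ncWord {g δ : ℕ} (β : Fin δ → Fin g) : FreeAlgebra ℂ (Fin g) :=
  (List.ofFn fun i => FreeAlgebra.ι ℂ (β i)).prod

/-- The ordered product `x^{μ 0} x^{μ 1} ⋯ x^{μ (d-1)}` of the `δ`-blocks of `μ`. -/
noncomputable def ncGWord {g d δ : ℕ} (μ : Fin d → Fin δ → Fin g) : FreeAlgebra ℂ (Fin g) :=
  (List.ofFn fun i => ncWord (μ i)).prod

/-! Expanding each `d`-th power noncommutatively gives `∑_μ (∏ i, A s (μ i)) x^μ`, so both sides
are combinations of the block words `x^μ`. Each `x^μ` is the basis monomial of the free algebra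
indexed by the concatenation of the blocks `μ i`, and since all blocks have length `δ` this
concatenation determines `μ`; hence the `x^μ` are linearly independent and the identity holds iff
the coefficients agree. -/

open Finset

theorem FreeAlgebra.basisFreeMonoid_apply (R X : Type*) [CommSemiring R] (w : FreeMonoid X) :
    basisFreeMonoid R X w = FreeMonoid.lift (ι R) w := by
  simp [basisFreeMonoid, equivMonoidAlgebraFreeMonoid]

theorem List.flatten_ofFn_ofFn_injective {α : Type*} {n : ℕ} : ∀ {m : ℕ},
    Function.Injective fun μ : Fin m → Fin n → α =>
      (List.ofFn fun i => List.ofFn (μ i)).flatten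
  | 0, _, _, _ => funext fun i => i.elim0
  | m + 1, μ, ν, h => by
    simp only [List.ofFn_succ, List.flatten_cons] at h
    obtain ⟨h₀, hsucc⟩ := List.append_inj h (by simp)
    refine funext (Fin.cases (List.ofFn_injective h₀) fun i => ?_)
    exact congrFun (flatten_ofFn_ofFn_injective (m := m) hsucc) i

theorem sum_smul_pow_eq_sum_prod_smul_ofFn {R A ι : Type*} [CommSemiring R] [Semiring A]
    [Algebra R A] [Fintype ι] (c : ι → R) (y : ι → A) (n : ℕ) :
    (∑ i, c i • y i) ^ n =
      ∑ μ : Fin n → ι, (∏ k, c (μ k)) • (List.ofFn fun k => y (μ k)).prod := by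
  induction n with
  | zero => simp
  | succ n ih =>
    rw [pow_succ', ih, sum_mul_sum, ← (Fin.consEquiv fun _ => ι).sum_comp, Fintype.sum_prod_type]
    refine sum_congr rfl fun i _ => sum_congr rfl fun μ _ => ?_
    simp only [Fin.consEquiv_apply, Fin.prod_univ_succ, List.ofFn_succ, List.prod_cons,
      Fin.cons_zero, Fin.cons_succ, smul_mul_smul_comm]

section Words

variable {g d δ : ℕ}

theorem ncWord_eq_basisFreeMonoid (β : Fin δ → Fin g) :
    ncWord β = FreeAlgebra.basisFreeMonoid ℂ (Fin g) (.ofList (List.ofFn β)) := by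
  rw [FreeAlgebra.basisFreeMonoid_apply, FreeMonoid.lift_ofList, List.map_ofFn]
  rfl

theorem ncGWord_eq_basisFreeMonoid (μ : Fin d → Fin δ → Fin g) :
    ncGWord μ = FreeAlgebra.basisFreeMonoid ℂ (Fin g)
      (.ofList (List.ofFn fun i => List.ofFn (μ i)).flatten) := by
  rw [FreeAlgebra.basisFreeMonoid_apply, FreeMonoid.ofList_flatten, map_list_prod, List.map_map,
    List.map_ofFn, ncGWord]
  simp only [ncWord_eq_basisFreeMonoid, FreeAlgebra.basisFreeMonoid_apply]
  rfl

theorem linearIndependent_ncGWord :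
    LinearIndependent ℂ (ncGWord : (Fin d → Fin δ → Fin g) → FreeAlgebra ℂ (Fin g)) := by
  simp only [funext ncGWord_eq_basisFreeMonoid]
  exact (FreeAlgebra.basisFreeMonoid ℂ _).linearIndependent.comp _
    (FreeMonoid.ofList.injective.comp List.flatten_ofFn_ofFn_injective)

theorem sum_pow_ncWord_eq_sum_smul_ncGWord {t : ℕ} (A : Fin t → (Fin δ → Fin g) → ℂ) :
    ∑ s, (∑ β, A s β • ncWord β) ^ d = ∑ μ : Fin d → Fin δ → Fin g,
      (∑ s, ∏ i, A s (μ i)) • ncGWord μ := by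
  simp only [sum_smul_pow_eq_sum_prod_smul_ofFn, sum_smul]
  exact sum_comm

end Words

theorem stmt9_general (g d δ t : ℕ)
    (P : (Fin d → (Fin δ → Fin g)) → ℂ) (A : Fin t → (Fin δ → Fin g) → ℂ) :
    ((∑ μ : Fin d → (Fin δ → Fin g), P μ • ncGWord μ)
        = ∑ s : Fin t, (∑ β : Fin δ → Fin g, A s β • ncWord β) ^ d)
      ↔ ∀ μ : Fin d → (Fin δ → Fin g),
          P μ = ∑ s : Fin t, ∏ i : Fin d, A s (μ i) := by
  rw [sum_pow_ncWord_eq_sum_smul_ncGWord]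
  exact ⟨Fintype.linearIndependent_iffₛ.mp linearIndependent_ncGWord _ _,
    fun h => Fintype.sum_congr _ _ fun μ => by rw [h μ]⟩

theorem stmt9 (g d δ t : ℕ) (hg : 1 ≤ g) (hd : 1 ≤ d) (hδ : 1 ≤ δ) (ht : 1 ≤ t)
    (P : (Fin d → (Fin δ → Fin g)) → ℂ) (A : Fin t → (Fin δ → Fin g) → ℂ) :
    ((∑ μ : Fin d → (Fin δ → Fin g), P μ • ncGWord μ)
        = ∑ s : Fin t, (∑ β : Fin δ → Fin g, A s β • ncWord β) ^ d)
      ↔ ∀ μ : Fin d → (Fin δ → Fin g),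
          P μ = ∑ s : Fin t, ∏ i : Fin d, A s (μ i) :=
  stmt9_general g d δ t P A
end

section
/- Let p = x₀x₁x₁x₀ + x₀x₁x₀x₀ + x₀x₀x₁x₀ + x₀⁴ ∈ FreeAlgebra ℂ (Fin 2) (the expansion of (x₀x₁ + x₀²)(x₁x₀ + x₀²)). Then: (a) p violates the 2-compatibility condition (its grouped coefficient at the word x₀x₀x₀x₁ is 0 while at x₀x₁x₀x₀ it is 1, although these words have the same multiset of 2-blocks), and consequently p has no (2,2)-NC Waring decomposition: for no t ≥ 1 and no homogeneous degree-2 noncommutative polynomials H₁, …, H_t does p = ∑_{s} H_s² hold; (b) nevertheless the commutative collapse of p equals (X₀X₁ + X₀²)² in MvPolynomial (Fin 2) ℂ. -/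
open scoped BigOperators

/-- The generators of the free algebra on two letters. -/
noncomputable def x (j : Fin 2) : FreeAlgebra ℂ (Fin 2) := FreeAlgebra.ι ℂ j

/-- The polynomial `p = x₀x₁x₁x₀ + x₀x₁x₀x₀ + x₀x₀x₁x₀ + x₀⁴`,
the expansion of `(x₀x₁ + x₀²)(x₁x₀ + x₀²)`. -/
noncomputable def pEx : FreeAlgebra ℂ (Fin 2) :=
  x 0 * x 1 * x 1 * x 0 + x 0 * x 1 * x 0 * x 0 + x 0 * x 0 * x 1 * x 0 + x 0 * x 0 * x 0 * x 0

/-!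
The coefficient of a word `w₁w₂` (with `w₁`, `w₂` of length two) in a sum of squares
`∑ₛ Hₛ²` of quadratic forms is `∑ₛ Hₛ(w₁) Hₛ(w₂)`, which is symmetric in the two blocks.
The word `x₀x₁·x₀x₀` occurs in `p` with coefficient `1`, but `x₀x₀·x₀x₁` does not occur at all.
-/

open Function FreeAlgebra

namespace FreeAlgebra

variable {R X : Type*} [CommSemiring R]

theorem basisFreeMonoid_apply_s18 (w : FreeMonoid X) :
    basisFreeMonoid R X w = FreeMonoid.lift (ι R) w := by
  simp [basisFreeMonoid, equivMonoidAlgebraFreeMonoid]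

theorem basisFreeMonoid_coord_sum_smul {κ : Type*} [Fintype κ] {w : κ → FreeMonoid X}
    (hw : Injective w) (c : κ → R) (i : κ) :
    (basisFreeMonoid R X).coord (w i) (∑ j, c j • FreeMonoid.lift (ι R) (w j)) = c i := by
  classical
  simp only [map_sum, map_smul, ← basisFreeMonoid_apply_s18, Module.Basis.coord_apply,
    Module.Basis.repr_self, Finsupp.single_apply, hw.eq_iff, smul_eq_mul, mul_ite, mul_one,
    mul_zero, Fintype.sum_ite_eq']

end FreeAlgebra

section GroupedCoeff

variable {R X : Type*} [CommSemiring R]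

def blockWord (μ : Fin 2 → Fin 2 → X) : FreeMonoid X :=
  .of (μ 0 0) * .of (μ 0 1) * .of (μ 1 0) * .of (μ 1 1)

theorem blockWord_injective : Injective (blockWord (X := X)) := by
  intro μ ν h
  have h' := congrArg FreeMonoid.toList h
  simp only [blockWord, FreeMonoid.toList_mul, FreeMonoid.toList_of, List.cons_append,
    List.nil_append, List.cons.injEq, and_true] at h'
  obtain ⟨h00, h01, h10, h11⟩ := h'
  ext i j
  fin_cases i <;> fin_cases j <;> assumption

theorem lift_ι_blockWord (μ : Fin 2 → Fin 2 → X) :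
    FreeMonoid.lift (ι R) (blockWord μ)
      = ι R (μ 0 0) * ι R (μ 0 1) * ι R (μ 1 0) * ι R (μ 1 1) := by
  simp [blockWord]

variable (R) in
noncomputable def groupedCoeff (μ : Fin 2 → Fin 2 → X) : FreeAlgebra R X →ₗ[R] R :=
  (basisFreeMonoid R X).coord (blockWord μ)

theorem groupedCoeff_ι_mul_ι_mul_ι_mul_ι [DecidableEq X] (a b c d : X)
    (μ : Fin 2 → Fin 2 → X) :
    groupedCoeff R μ (ι R a * ι R b * ι R c * ι R d)
      = if ![![a, b], ![c, d]] = μ then 1 else 0 := by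
  classical
  have hword : ι R a * ι R b * ι R c * ι R d
      = FreeMonoid.lift (ι R) (blockWord ![![a, b], ![c, d]]) :=
    (lift_ι_blockWord ![![a, b], ![c, d]]).symm
  rw [hword]
  simp [groupedCoeff, ← basisFreeMonoid_apply_s18, Finsupp.single_apply, blockWord_injective.eq_iff]

variable [Fintype X]

theorem groupedCoeff_sum_smul (P : (Fin 2 → Fin 2 → X) → R) (μ : Fin 2 → Fin 2 → X) :
    groupedCoeff R μ
      (∑ ν, P ν • (ι R (ν 0 0) * ι R (ν 0 1) * ι R (ν 1 0) * ι R (ν 1 1))) = P μ := by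
  simpa only [groupedCoeff, lift_ι_blockWord] using
    basisFreeMonoid_coord_sum_smul blockWord_injective P μ

theorem sq_sum_smul_ι_mul_ι (A : (Fin 2 → X) → R) :
    (∑ β, A β • (ι R (β 0) * ι R (β 1))) ^ 2
      = ∑ μ : Fin 2 → Fin 2 → X,
          (∏ i, A (μ i)) • (ι R (μ 0 0) * ι R (μ 0 1) * ι R (μ 1 0) * ι R (μ 1 1)) := by
  rw [sq, Finset.sum_mul_sum, ← (piFinTwoEquiv fun _ => Fin 2 → X).symm.sum_comp,
    Fintype.sum_prod_type]
  refine Finset.sum_congr rfl fun β _ => Finset.sum_congr rfl fun γ _ => ?_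
  simp [Fin.prod_univ_two, smul_smul, mul_comm, mul_assoc]

theorem groupedCoeff_sum_sq {κ : Type*} [Fintype κ] (A : κ → (Fin 2 → X) → R)
    (μ : Fin 2 → Fin 2 → X) :
    groupedCoeff R μ (∑ s, (∑ β, A s β • (ι R (β 0) * ι R (β 1))) ^ 2)
      = ∑ s, ∏ i, A s (μ i) := by
  rw [map_sum]
  exact Finset.sum_congr rfl fun s _ => by rw [sq_sum_smul_ι_mul_ι, groupedCoeff_sum_smul]

theorem groupedCoeff_comp_perm_of_eq_sum_sq {κ : Type*} [Fintype κ] {p : FreeAlgebra R X}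
    {A : κ → (Fin 2 → X) → R} (hp : p = ∑ s, (∑ β, A s β • (ι R (β 0) * ι R (β 1))) ^ 2)
    (μ : Fin 2 → Fin 2 → X) (π : Equiv.Perm (Fin 2)) :
    groupedCoeff R (μ ∘ π) p = groupedCoeff R μ p := by
  rw [hp, groupedCoeff_sum_sq, groupedCoeff_sum_sq]
  exact Finset.sum_congr rfl fun s _ => Equiv.prod_comp π fun i => A s (μ i)

end GroupedCoeff

theorem groupedCoeff_pEx_x0x0x0x1 : groupedCoeff ℂ ![![0, 0], ![0, 1]] pEx = 0 := by
  simp [pEx, x, groupedCoeff_ι_mul_ι_mul_ι_mul_ι]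

theorem groupedCoeff_pEx_x0x1x0x0 : groupedCoeff ℂ ![![0, 1], ![0, 0]] pEx = 1 := by
  simp [pEx, x, groupedCoeff_ι_mul_ι_mul_ι_mul_ι]

theorem stmt18 :
    -- (a) p violates the 2-compatibility condition ...
    (∀ P : (Fin 2 → (Fin 2 → Fin 2)) → ℂ,
      pEx = (∑ μ : Fin 2 → (Fin 2 → Fin 2),
          P μ • (x (μ 0 0) * x (μ 0 1) * x (μ 1 0) * x (μ 1 1))) →
      (P (![![0, 0], ![0, 1]] : Fin 2 → Fin 2 → Fin 2) = 0
        ∧ P (![![0, 1], ![0, 0]] : Fin 2 → Fin 2 → Fin 2) = 1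
        ∧ ∃ π : Equiv.Perm (Fin 2),
            (![![0, 1], ![0, 0]] : Fin 2 → Fin 2 → Fin 2)
              = (![![0, 0], ![0, 1]] : Fin 2 → Fin 2 → Fin 2) ∘ π))
    ∧
    -- ... and consequently p has no (2,2)-NC Waring decomposition
    (¬ ∃ (t : ℕ) (_ : 1 ≤ t) (A : Fin t → (Fin 2 → Fin 2) → ℂ),
        pEx = ∑ s : Fin t, (∑ β : Fin 2 → Fin 2, A s β • (x (β 0) * x (β 1))) ^ 2)
    ∧
    -- (b) nevertheless the commutative collapse of p equals (X₀X₁ + X₀²)²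
    ((MvPolynomial.X 0 * MvPolynomial.X 1 * MvPolynomial.X 1 * MvPolynomial.X 0
        + MvPolynomial.X 0 * MvPolynomial.X 1 * MvPolynomial.X 0 * MvPolynomial.X 0
        + MvPolynomial.X 0 * MvPolynomial.X 0 * MvPolynomial.X 1 * MvPolynomial.X 0
        + MvPolynomial.X 0 * MvPolynomial.X 0 * MvPolynomial.X 0 * MvPolynomial.X 0
        : MvPolynomial (Fin 2) ℂ)
      = (MvPolynomial.X 0 * MvPolynomial.X 1 + MvPolynomial.X 0 ^ 2) ^ 2) := by
  have hswap : (![![0, 1], ![0, 0]] : Fin 2 → Fin 2 → Fin 2)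
      = ![![0, 0], ![0, 1]] ∘ Equiv.swap 0 1 := by
    decide
  refine ⟨fun P hP => ?_, ?_, by ring⟩
  · have hcoeff (μ : Fin 2 → Fin 2 → Fin 2) : P μ = groupedCoeff ℂ μ pEx := by
      rw [hP]
      exact (groupedCoeff_sum_smul P μ).symm
    rw [hcoeff, hcoeff, groupedCoeff_pEx_x0x0x0x1, groupedCoeff_pEx_x0x1x0x0]
    exact ⟨rfl, rfl, _, hswap⟩
  · rintro ⟨t, -, A, hA⟩
    have hcompat := groupedCoeff_comp_perm_of_eq_sum_sq hA ![![0, 0], ![0, 1]] (Equiv.swap 0 1)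
    rw [← hswap, groupedCoeff_pEx_x0x0x0x1, groupedCoeff_pEx_x0x1x0x0] at hcompat
    exact one_ne_zero hcompat
end
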